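/- For α ∈ (−2,2), the Takagi–Landsberg function f_α satisfies f_α(t) ≥ 0 for all t ∈ [0,1] if and only if α ≥ −1. Moreover, there is no α ∈ (−2,2) such that f_α(t) ≤ 0 for all t ∈ [0,1]. -/

import Mathlib

open MeasureTheory Filter Set

/-- The tent map: distance to the nearest integer. -/
noncomputable def phi (t : ℝ) : ℝ := ⨅ z : ℤ, |t - (z : ℝ)|

/-- A function in the Takagi class, for coefficient sequence `c`. -/
noncomputable def takagiF (c : ℕ → ℝ) (t : ℝ) : ℝ := ∑' m : ℕ, c m * phi (2 ^ m * t)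

/-- `T(ρ) = Σ 2^{-(n+2)} (1 - ρ n)`. -/
noncomputable def Trho (ρ : ℕ → ℝ) : ℝ := ∑' n : ℕ, (1 - ρ n) / 2 ^ (n + 2)

/-- A `{-1,+1}`-valued sequence. -/
def IsSign (ρ : ℕ → ℝ) : Prop := ∀ n, ρ n = 1 ∨ ρ n = -1

/-- `ρ` is a Rademacher expansion of `t`. -/
def IsRademacherExp (ρ : ℕ → ℝ) (t : ℝ) : Prop := IsSign ρ ∧ Trho ρ = t

/-- The step condition for coefficients `c`. -/
def StepCond (c : ℕ → ℝ) (ρ : ℕ → ℝ) : Prop :=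
  ∀ n : ℕ, 1 ≤ n → ρ n * ∑ m ∈ Finset.range n, 2 ^ m * c m * ρ m ≤ 0

noncomputable def sharpAux (c : ℕ → ℝ) : ℕ → ℝ × ℝ
  | 0 => (1, c 0)
  | n + 1 =>
    let S := (sharpAux c n).2
    let r : ℝ := if S ≤ 0 then 1 else -1
    (r, S + 2 ^ (n + 1) * c (n + 1) * r)

/-- The sequence `ρ♯` for coefficients `c`. -/
noncomputable def rhoSharp (c : ℕ → ℝ) (n : ℕ) : ℝ := (sharpAux c n).1

noncomputable def flatAux (c : ℕ → ℝ) : ℕ → ℝ × ℝ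
  | 0 => (1, c 0)
  | n + 1 =>
    let S := (flatAux c n).2
    let r : ℝ := if S < 0 then 1 else -1
    (r, S + 2 ^ (n + 1) * c (n + 1) * r)

/-- The sequence `ρ♭` for coefficients `c`. -/
noncomputable def rhoFlat (c : ℕ → ℝ) (n : ℕ) : ℝ := (flatAux c n).1

/-- The Takagi–Landsberg function with parameter `α`. -/
noncomputable def fTL (α : ℝ) (t : ℝ) : ℝ := ∑' m : ℕ, α ^ m / 2 ^ m * phi (2 ^ m * t)

noncomputable def sharpAuxTL (α : ℝ) : ℕ → ℝ × ℝ
  | 0 => (1, 1)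
  | n + 1 =>
    let S := (sharpAuxTL α n).2
    let r : ℝ := if S ≤ 0 then 1 else -1
    (r, S + α ^ (n + 1) * r)

/-- The sequence `ρ♯(α)` for the Takagi–Landsberg function. -/
noncomputable def rhoSharpTL (α : ℝ) (n : ℕ) : ℝ := (sharpAuxTL α n).1

noncomputable def flatAuxTL (α : ℝ) : ℕ → ℝ × ℝ
  | 0 => (1, 1)
  | n + 1 =>
    let S := (flatAuxTL α n).2
    let r : ℝ := if S < 0 then 1 else -1
    (r, S + α ^ (n + 1) * r)

/-- The sequence `ρ♭(α)` for the Takagi–Landsberg function. -/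
noncomputable def rhoFlatTL (α : ℝ) (n : ℕ) : ℝ := (flatAuxTL α n).1

/-- `τ♯(α) = T(ρ♯(α))`. -/
noncomputable def tauSharp (α : ℝ) : ℝ := Trho (rhoSharpTL α)

/-- `τ♭(α) = T(ρ♭(α))`. -/
noncomputable def tauFlat (α : ℝ) : ℝ := Trho (rhoFlatTL α)

/-- The Littlewood polynomial `p_{2n}(x) = 1 - x - x² - ⋯ - x^{2n}`. -/
noncomputable def p2n (n : ℕ) (x : ℝ) : ℝ := 1 - ∑ m ∈ Finset.Icc 1 (2 * n), x ^ m

/-!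
Group the series in consecutive pairs: since `phi (2 * s) ≤ 2 * phi s`, each pair
`(α/2)^(2k) (phi s + (α/2) phi (2s))`, with `s = 4^k t`, is nonnegative once `α ≥ -1`.
Conversely, only finitely many terms survive at dyadic points, giving `f_α (1/4) = (1 + α)/4`
and `f_α (1/2) = 1/2`.
-/

open Finset

lemma phi_le_abs_sub (t : ℝ) (z : ℤ) : phi t ≤ |t - z| :=
  ciInf_le ⟨0, by rintro x ⟨z, rfl⟩; exact abs_nonneg _⟩ z

lemma phi_nonneg (t : ℝ) : 0 ≤ phi t := Real.iInf_nonneg fun _ => abs_nonneg _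

lemma phi_le_half (t : ℝ) : phi t ≤ 1 / 2 :=
  (phi_le_abs_sub t (round t)).trans (abs_sub_round t)

lemma phi_intCast (z : ℤ) : phi z = 0 :=
  le_antisymm (by simpa using phi_le_abs_sub z z) (phi_nonneg _)

lemma phi_eq_self_of_mem_Icc {t : ℝ} (ht : t ∈ Icc (0 : ℝ) (1 / 2)) : phi t = t := by
  refine le_antisymm (by simpa [abs_of_nonneg ht.1] using phi_le_abs_sub t 0) (le_ciInf fun z => ?_)
  rcases le_or_gt z 0 with hz | hz
  · have : (z : ℝ) ≤ 0 := by exact_mod_cast hz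
    exact le_abs.2 (Or.inl (by linarith))
  · have : (1 : ℝ) ≤ z := by exact_mod_cast hz
    exact le_abs.2 (Or.inr (by linarith [ht.2]))

lemma phi_two_mul_le (t : ℝ) : phi (2 * t) ≤ 2 * phi t := by
  suffices phi (2 * t) / 2 ≤ phi t by linarith
  refine le_ciInf fun z => (div_le_iff₀' two_pos).2 ?_
  calc phi (2 * t) ≤ |2 * t - ((2 * z : ℤ) : ℝ)| := phi_le_abs_sub _ _
    _ = 2 * |t - z| := by push_cast; rw [← mul_sub, abs_mul, abs_two]

lemma summable_fTL_term {α : ℝ} (hα : |α| < 2) (t : ℝ) :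
    Summable fun m : ℕ => α ^ m / 2 ^ m * phi (2 ^ m * t) := by
  have hgeom := summable_geometric_of_lt_one (r := |α| / 2) (by positivity) (by linarith)
  refine Summable.of_norm_bounded (hgeom.mul_right (1 / 2)) fun m => ?_
  rw [Real.norm_eq_abs, abs_mul, abs_of_nonneg (phi_nonneg _), abs_div, abs_pow, abs_pow, abs_two,
    ← div_pow]
  exact mul_le_mul_of_nonneg_left (phi_le_half _) (by positivity)

lemma phi_add_mul_phi_two_mul_nonneg {α : ℝ} (hα : -1 ≤ α) (s : ℝ) :
    0 ≤ phi s + α / 2 * phi (2 * s) :=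
  calc 0 ≤ phi s - phi (2 * s) / 2 := by linarith [phi_two_mul_le s]
    _ ≤ phi s + α / 2 * phi (2 * s) := by nlinarith [phi_nonneg (2 * s)]

lemma fTL_nonneg {α : ℝ} (hα₁ : -1 ≤ α) (hα₂ : α < 2) (t : ℝ) : 0 ≤ fTL α t := by
  set g : ℕ → ℝ := fun m => α ^ m / 2 ^ m * phi (2 ^ m * t)
  have hg : Summable g := summable_fTL_term (abs_lt.2 ⟨by linarith, hα₂⟩) t
  have heven : Summable fun k => g (2 * k) := hg.comp_injective fun a b h => by omega
  have hodd : Summable fun k => g (2 * k + 1) := hg.comp_injective fun a b h => by omega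
  have hpair (k : ℕ) : g (2 * k) + g (2 * k + 1) =
      (α / 2) ^ (2 * k) * (phi (2 ^ (2 * k) * t) + α / 2 * phi (2 * (2 ^ (2 * k) * t))) := by
    simp only [g, pow_succ, div_pow]
    ring_nf
  calc 0 ≤ ∑' k, (g (2 * k) + g (2 * k + 1)) := tsum_nonneg fun k => by
        rw [hpair, pow_mul]
        exact mul_nonneg (by positivity) (phi_add_mul_phi_two_mul_nonneg hα₁ _)
    _ = ∑' m, g m := by rw [heven.tsum_add hodd, tsum_even_add_odd heven hodd]

lemma fTL_inv_two_pow (α : ℝ) (k : ℕ) :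
    fTL α (2 ^ k)⁻¹ = ∑ m ∈ range k, α ^ m / 2 ^ m * phi (2 ^ m * (2 ^ k)⁻¹) := by
  refine tsum_eq_sum fun m hm => ?_
  obtain ⟨j, rfl⟩ := Nat.exists_eq_add_of_le (not_lt.1 (mem_range.not.1 hm))
  have : (2 : ℝ) ^ (k + j) * (2 ^ k)⁻¹ = ((2 ^ j : ℤ) : ℝ) := by
    push_cast; rw [pow_add]; field_simp
  rw [this, phi_intCast, mul_zero]

lemma fTL_quarter (α : ℝ) : fTL α (1 / 4) = (1 + α) / 4 := by
  have h := fTL_inv_two_pow α 2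
  norm_num [sum_range_succ] at h
  rw [h, phi_eq_self_of_mem_Icc (by norm_num), phi_eq_self_of_mem_Icc (by norm_num)]
  ring

lemma fTL_half (α : ℝ) : fTL α (1 / 2) = 1 / 2 := by
  have h := fTL_inv_two_pow α 1
  norm_num at h
  rw [h, phi_eq_self_of_mem_Icc (by norm_num)]

theorem takagi_landsberg_nonneg_iff
    (α : ℝ) (hα : α ∈ Set.Ioo (-2 : ℝ) 2) :
    ((∀ t ∈ Set.Icc (0 : ℝ) 1, 0 ≤ fTL α t) ↔ -1 ≤ α)
    ∧ ¬∃ β ∈ Set.Ioo (-2 : ℝ) 2, ∀ t ∈ Set.Icc (0 : ℝ) 1, fTL β t ≤ 0 := by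
  refine ⟨⟨fun h => ?_, fun h t _ => fTL_nonneg h hα.2 t⟩, fun ⟨β, _, h⟩ => ?_⟩
  · have := h (1 / 4) ⟨by norm_num, by norm_num⟩
    rw [fTL_quarter] at this
    linarith
  · have := h (1 / 2) ⟨by norm_num, by norm_num⟩
    rw [fTL_half] at this
    linarith
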